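/- arXiv:2010.13274 — 4 statements merged into one kernel-verified Lean document; each statement's English description precedes it below -/
import Mathlib

section
/- Let n > 3, let G be a group, and let r_1, …, r_n ∈ G satisfy the relations (Rb1)–(Rb8). Then the elements s_0 := r_1 and s_i := r_{i+1} r_1 r_2 r_1 r_{i+1} for i ∈ [1,n-1] satisfy the type B Coxeter relations: s_i^2 = 1 for i ∈ [0,n-1]; (s_0 s_1)^4 = 1; (s_i s_{i+1})^3 = 1 for i ∈ [1,n-2]; and (s_i s_j)^2 = 1 for i ∈ [0,n-3] and j ∈ [i+2,n-1]. -/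
/-! With `t = r₁ r₂ r₁`, every `s i` with `i ≥ 1` is the conjugate `r_{i+1} t r_{i+1}` of an
involution. For involutions `x, y`, `(x y)² = 1` means that `x` and `y` commute, and
`(x y)⁴ = 1` means that `x` commutes with `y x y`. Thus (Rb3) and (Rb5) make `r_m r₁ r_m` commute
with `r₁` and `r₂`, hence with `t`, and conjugating by `r_m` gives `s₀ s_j = s_j s₀`; (Rb8)
rewrites `s_i` as `r_l r_m t r_m r_l`, which reduces `s_i s_j = s_j s_i` to (Rb4). Finally (Rb6)
rewrites `s_{k-1}` as `r_{k+1} r₁ r₂ r₃ r₂ r_{k+1}`, so `s_{k-1} s_k` is conjugate to `r₂ r₃ r₁`.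
That this element has order 3 is (Rb6) for `k = 2`, once one sees that this relation also makes
`r₁` commute with `r₂ r₃ r₂`. -/

section Involutions

variable {G : Type*} [Group G] {x y z : G}

theorem mul_mul_cancel_left_of_mul_self (hx : x * x = 1) (y : G) : x * (x * y) = y := by
  rw [← mul_assoc, hx, one_mul]

theorem eq_of_mul_eq_one_of_mul_self (hy : y * y = 1) (h : x * y = 1) : x = y := by
  rw [eq_inv_of_mul_eq_one_left h, inv_eq_of_mul_eq_one_right hy]

theorem conj_pow_of_mul_self (hx : x * x = 1) (n : ℕ) : (x * y * x) ^ n = x * y ^ n * x := by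
  simpa only [inv_eq_of_mul_eq_one_right hx] using conj_pow (a := x) (b := y) (i := n)

theorem conj_mul_self_eq_one (hx : x * x = 1) (hy : y * y = 1) :
    x * y * x * (x * y * x) = 1 := by
  rw [← sq, conj_pow_of_mul_self hx, sq, hy, mul_one, hx]

theorem Commute.conj_of_mul_self (hx : x * x = 1) (h : Commute y z) :
    Commute (x * y * x) (x * z * x) := by
  simpa only [inv_eq_of_mul_eq_one_right hx] using (Commute.conj_iff x).2 h

theorem commute_of_mul_sq_eq_one (hx : x * x = 1) (hy : y * y = 1) (h : (x * y) ^ 2 = 1) :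
    Commute x y := by
  have := eq_inv_of_mul_eq_one_left ((sq (x * y)).symm.trans h)
  rwa [mul_inv_rev, inv_eq_of_mul_eq_one_right hx, inv_eq_of_mul_eq_one_right hy] at this

theorem mul_sq_eq_one_of_commute (hx : x * x = 1) (hy : y * y = 1) (h : Commute x y) :
    (x * y) ^ 2 = 1 := by
  rw [h.mul_pow, sq, sq, hx, hy, one_mul]

theorem commute_conj_of_mul_pow_four_eq_one (hx : x * x = 1) (hy : y * y = 1)
    (h : (x * y) ^ 4 = 1) : Commute x (y * x * y) :=
  commute_of_mul_sq_eq_one hx (conj_mul_self_eq_one hy hx) (by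
    rw [← h]; simp only [pow_succ, pow_zero, one_mul, mul_assoc])

end Involutions

section Relations

variable {G : Type*} [Group G] {a b c k l m x y : G}

theorem pow_three_eq_one_of_rb6 (ha : a * a = 1) (hb : b * b = 1) (hc : c * c = 1)
    (h : b * a * b * a * b * c * b * c * b * a * c = 1) : (b * c * a) ^ 3 = 1 := by
  have Cb := mul_mul_cancel_left_of_mul_self hb
  have Cc := mul_mul_cancel_left_of_mul_self hc
  have hX : b * a * b * a * b * (b * a * b * a * b) = 1 := by
    simpa only [mul_assoc] using conj_mul_self_eq_one hb (conj_mul_self_eq_one ha hb)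
  have hqa : Commute a (b * c * b) := by
    refine (commute_of_mul_sq_eq_one (conj_mul_self_eq_one hb hc) ha ?_).symm
    have hconj : c * (b * c * b * a) * c = b * a * b * a * b :=
      eq_of_mul_eq_one_of_mul_self hX (by rw [mul_eq_one_comm]; simpa only [mul_assoc] using h)
    calc (b * c * b * a) ^ 2
        = c * (c * (b * c * b * a) * c * (c * (b * c * b * a) * c)) * c := by
          simp only [sq, mul_assoc, Cc, hc, mul_one]
      _ = 1 := by rw [hconj, hX, mul_one, hc]
  have hacb : (a * c * b) ^ 3 = 1 :=
    calc (a * c * b) ^ 3 = a * b * (b * c * b * a) * c * b * a * c * b := by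
          simp only [pow_succ, pow_zero, one_mul, mul_assoc, Cb]
      _ = a * b * (a * (b * c * b)) * c * b * a * c * b := by rw [hqa.eq]
      _ = b * (b * a * b * a * b * c * b * c * b * a * c) * b := by
          simp only [mul_assoc, Cb]
      _ = 1 := by rw [h, mul_one, hb]
  have hinv : b * c * a = (a * c * b)⁻¹ := by
    simp only [mul_inv_rev, inv_eq_of_mul_eq_one_right ha, inv_eq_of_mul_eq_one_right hb,
      inv_eq_of_mul_eq_one_right hc, mul_assoc]
  rw [hinv, inv_pow, hacb, inv_one]

theorem braid_of_rb6 (ha : a * a = 1) (hb : b * b = 1) (hc : c * c = 1) (hx : x * x = 1)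
    (hy : y * y = 1) (h₂ : b * a * b * a * b * c * b * c * b * a * c = 1)
    (h : x * a * b * a * x * y * b * c * b * a * y = 1) :
    (x * a * b * a * x * (y * a * b * a * y)) ^ 3 = 1 := by
  have Ca := mul_mul_cancel_left_of_mul_self ha
  have Cb := mul_mul_cancel_left_of_mul_self hb
  have Cy := mul_mul_cancel_left_of_mul_self hy
  have hs : x * a * b * a * x * (x * a * b * a * x) = 1 := by
    simpa only [mul_assoc] using conj_mul_self_eq_one hx (conj_mul_self_eq_one ha hb)
  have hxy : y * (b * c * b * a) * y = x * a * b * a * x :=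
    eq_of_mul_eq_one_of_mul_self hs (by rw [mul_eq_one_comm]; simpa only [mul_assoc] using h)
  calc (x * a * b * a * x * (y * a * b * a * y)) ^ 3
      = (y * (b * c * a) * y) ^ 3 := by
        rw [← hxy]; simp only [mul_assoc, Ca, Cb, Cy]
    _ = 1 := by rw [conj_pow_of_mul_self hy, pow_three_eq_one_of_rb6 ha hb hc h₂, mul_one, hy]

theorem sq_eq_one_of_rb3_rb5 (ha : a * a = 1) (hb : b * b = 1) (hm : m * m = 1)
    (h₄ : (a * m) ^ 4 = 1) (h₂ : (m * a * m * b) ^ 2 = 1) :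
    (a * (m * a * b * a * m)) ^ 2 = 1 := by
  have hma : Commute (m * a * m) a := (commute_conj_of_mul_pow_four_eq_one ha hm h₄).symm
  have hmb : Commute (m * a * m) b :=
    commute_of_mul_sq_eq_one (conj_mul_self_eq_one hm ha) hb h₂
  have key : Commute a (m * (a * b * a) * m) := by
    simpa only [mul_assoc, mul_mul_cancel_left_of_mul_self hm, hm, mul_one] using
      ((hma.mul_right hmb).mul_right hma).conj_of_mul_self hm
  simpa only [mul_assoc] using
    mul_sq_eq_one_of_commute ha (conj_mul_self_eq_one hm (conj_mul_self_eq_one ha hb)) key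

theorem sq_eq_one_of_rb4_rb8 (hx : x * x = 1) (hl : l * l = 1) (hm : m * m = 1)
    (h₄ : (x * m) ^ 4 = 1) (h₈ : k * x * k * (l * (m * x * m) * l) = 1) :
    (k * x * k * (l * x * l)) ^ 2 = 1 := by
  have hmxm := conj_mul_self_eq_one hm hx
  rw [eq_of_mul_eq_one_of_mul_self (conj_mul_self_eq_one hl hmxm) h₈]
  exact mul_sq_eq_one_of_commute (conj_mul_self_eq_one hl hmxm) (conj_mul_self_eq_one hl hx)
    ((commute_conj_of_mul_pow_four_eq_one hx hm h₄).symm.conj_of_mul_self hl)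

end Relations

theorem stmt15_general (n : ℕ) (hn : 3 < n) (G : Type*) [Group G] (r : ℕ → G)
    (hRb1 : ∀ k, 1 ≤ k → k ≤ n → r k * r k = 1)
    (hRb3 : ∀ k, 2 ≤ k → k ≤ n → (r 1 * r k) ^ 4 = 1)
    (hRb4 : ∀ k, 4 ≤ k → k ≤ n → (r 1 * r 2 * r 1 * r k) ^ 4 = 1)
    (hRb5 : ∀ k, 3 ≤ k → k ≤ n → (r k * r 1 * r k * r 2) ^ 2 = 1)
    (hRb6 : ∀ k, 2 ≤ k → k ≤ n - 1 →
      r k * r 1 * r 2 * r 1 * r k * r (k + 1) * r 2 * r 3 * r 2 * r 1 * r (k + 1) = 1)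
    (hRb8 : ∀ k l, 2 ≤ k → k ≤ n - 2 → k + 2 ≤ l → l ≤ n →
      r k * r 1 * r 2 * r 1 * r k * r l * r (l - k + 2) * r 1 * r 2 * r 1 * r (l - k + 2) * r l = 1) :
    let s : ℕ → G := fun i => if i = 0 then r 1 else r (i + 1) * r 1 * r 2 * r 1 * r (i + 1)
    (∀ i, i ≤ n - 1 → s i * s i = 1) ∧
    ((s 0 * s 1) ^ 4 = 1) ∧
    (∀ i, 1 ≤ i → i ≤ n - 2 → (s i * s (i + 1)) ^ 3 = 1) ∧
    (∀ i j, i ≤ n - 3 → i + 2 ≤ j → j ≤ n - 1 → (s i * s j) ^ 2 = 1) := by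
  intro s
  have hs : ∀ i, i ≠ 0 → s i = r (i + 1) * r 1 * r 2 * r 1 * r (i + 1) :=
    fun i hi => if_neg hi
  have h1 := hRb1 1 le_rfl (by omega)
  have h2 := hRb1 2 (by omega) (by omega)
  have ht : r 1 * r 2 * r 1 * (r 1 * r 2 * r 1) = 1 := conj_mul_self_eq_one h1 h2
  refine ⟨fun i hi => ?_, ?_, fun i hi₁ hi₂ => ?_, fun i j hi hij hj => ?_⟩
  · rcases eq_or_ne i 0 with rfl | hi₀
    · exact h1
    · rw [hs i hi₀]
      simpa only [mul_assoc] using conj_mul_self_eq_one (hRb1 (i + 1) (by omega) (by omega)) ht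
  · have h13 : s 0 * s 1 = (r 1 * r 2) ^ 3 := by
      rw [hs 1 one_ne_zero]; show r 1 * _ = _; simp only [pow_succ, pow_zero, one_mul, mul_assoc]
    rw [h13, ← pow_mul, mul_comm, pow_mul, hRb3 2 le_rfl (by omega), one_pow]
  · rw [hs i (by omega), hs (i + 1) (by omega)]
    exact braid_of_rb6 h1 h2 (hRb1 3 (by omega) (by omega))
      (hRb1 (i + 1) (by omega) (by omega)) (hRb1 (i + 2) (by omega) (by omega))
      (hRb6 2 le_rfl (by omega)) (hRb6 (i + 1) (by omega) (by omega))
  · rcases eq_or_ne i 0 with rfl | hi₀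
    · rw [hs j (by omega)]
      exact sq_eq_one_of_rb3_rb5 h1 h2 (hRb1 (j + 1) (by omega) (by omega))
        (hRb3 (j + 1) (by omega) (by omega)) (hRb5 (j + 1) (by omega) (by omega))
    · rw [hs i hi₀, hs j (by omega)]
      simpa only [mul_assoc] using sq_eq_one_of_rb4_rb8 ht (hRb1 (j + 1) (by omega) (by omega))
        (hRb1 (j + 1 - (i + 1) + 2) (by omega) (by omega)) (hRb4 _ (by omega) (by omega))
        (by simpa only [mul_assoc] using
          hRb8 (i + 1) (j + 1) (by omega) (by omega) (by omega) (by omega))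

theorem stmt15 (n : ℕ) (hn : 3 < n) (G : Type*) [Group G] (r : ℕ → G)
    (hRb1 : ∀ k, 1 ≤ k → k ≤ n → r k * r k = 1)
    (hRb2 : (r 2 * r 3) ^ 6 = 1)
    (hRb3 : ∀ k, 2 ≤ k → k ≤ n → (r 1 * r k) ^ 4 = 1)
    (hRb4 : ∀ k, 4 ≤ k → k ≤ n → (r 1 * r 2 * r 1 * r k) ^ 4 = 1)
    (hRb5 : ∀ k, 3 ≤ k → k ≤ n → (r k * r 1 * r k * r 2) ^ 2 = 1)
    (hRb6 : ∀ k, 2 ≤ k → k ≤ n - 1 →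
      r k * r 1 * r 2 * r 1 * r k * r (k + 1) * r 2 * r 3 * r 2 * r 1 * r (k + 1) = 1)
    (hRb7 : ∀ k, 2 ≤ k → k ≤ n - 1 →
      r (k + 1) * r 1 * r 2 * r 1 * r (k + 1) * r (k - 1) * r k * r (k + 1) * r k = 1)
    (hRb8 : ∀ k l, 2 ≤ k → k ≤ n - 2 → k + 2 ≤ l → l ≤ n →
      r k * r 1 * r 2 * r 1 * r k * r l * r (l - k + 2) * r 1 * r 2 * r 1 * r (l - k + 2) * r l = 1) :
    let s : ℕ → G := fun i => if i = 0 then r 1 else r (i + 1) * r 1 * r 2 * r 1 * r (i + 1)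
    (∀ i, i ≤ n - 1 → s i * s i = 1) ∧
    ((s 0 * s 1) ^ 4 = 1) ∧
    (∀ i, 1 ≤ i → i ≤ n - 2 → (s i * s (i + 1)) ^ 3 = 1) ∧
    (∀ i j, i ≤ n - 3 → i + 2 ≤ j → j ≤ n - 1 → (s i * s j) ^ 2 = 1) :=
  stmt15_general n hn G r hRb1 hRb3 hRb4 hRb5 hRb6 hRb8
end

section
/- Let n > 3, let G be a group, let s_0, s_1, …, s_{n-1} ∈ G satisfy the type B Coxeter relations, and define r_k = s_0 (s_1 s_0) (s_2 s_1 s_0) ⋯ (s_{k-1} s_{k-2} ⋯ s_0) for k ∈ [1,n] (so r_1 = s_0). Then the elements r_1, …, r_n satisfy the relations (Rb1)–(Rb8). -/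
/-- The word `s₀ (s₁ s₀) (s₂ s₁ s₀) ⋯ (s_{k-1} s_{k-2} ⋯ s₁ s₀)` in a group. -/
def rwordB {G : Type*} [Group G] (s : ℕ → G) (k : ℕ) : G :=
  ((List.range k).map (fun j => ((List.range (j + 1)).map (fun i => s (j - i))).prod)).prod

/-!
Think of `s₀` as the sign change of the first coordinate and of `sᵢ` (`i ≥ 1`) as the swap of
coordinates `i` and `i + 1` of a signed permutation. Then `r_k` reverses the first `k`
coordinates and negates them, so it factors as `p_k T_k`, where `T_k = t₁ ⋯ t_k` is the product
of the sign changes `t_j = s_{j-1} ⋯ s₁ s₀ s₁ ⋯ s_{j-1}` and `p_k = u₁ u₂ ⋯ u_{k-1}`,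
`u_j = s_j ⋯ s₁`, is the longest element of the symmetric group on the first `k` coordinates.
The Coxeter relations alone suffice to show that the `t_j` commute pairwise and are permuted by
the `sᵢ`, that `p_k` and `T_k` are commuting involutions, and that conjugation by `r_k` sends
`sᵢ` to `s_{k-i}` (`0 < i < k`) and `t₁` to `t_k` and fixes `t_j` for `j > k`. With these rules
each of (Rb1)–(Rb8) collapses to a product of commuting involutions.
-/

section Involutions

variable {G : Type*} [Group G] {a b x y : G}

theorem commute_of_involutions (ha : a * a = 1) (hb : b * b = 1) (h : (a * b) ^ 2 = 1) :
    Commute a b := by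
  have hab : a * b = (a * b)⁻¹ := eq_inv_of_mul_eq_one_left (by rwa [← sq])
  rwa [mul_inv_rev, inv_eq_of_mul_eq_one_right ha, inv_eq_of_mul_eq_one_right hb] at hab

theorem braid_of_involutions (ha : a * a = 1) (hb : b * b = 1) (h : (a * b) ^ 3 = 1) :
    a * b * a = b * a * b := by
  have hab : a * b * a = (b * a * b)⁻¹ :=
    eq_inv_of_mul_eq_one_left (by rw [← h]; simp only [pow_succ, pow_zero, one_mul, mul_assoc])
  simpa only [mul_inv_rev, inv_eq_of_mul_eq_one_right ha, inv_eq_of_mul_eq_one_right hb,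
    mul_assoc] using hab

theorem braid_four_of_involutions (ha : a * a = 1) (hb : b * b = 1) (h : (a * b) ^ 4 = 1) :
    a * b * a * b = b * a * b * a := by
  have hab : a * b * a * b = (a * b * a * b)⁻¹ :=
    eq_inv_of_mul_eq_one_left (by rw [← h]; simp only [pow_succ, pow_zero, one_mul, mul_assoc])
  simpa only [mul_inv_rev, inv_eq_of_mul_eq_one_right ha, inv_eq_of_mul_eq_one_right hb,
    mul_assoc] using hab

theorem Commute.mul_mul_self_eq_one (h : Commute a b) (ha : a * a = 1) (hb : b * b = 1) :
    a * b * (a * b) = 1 := by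
  rw [h.symm.mul_mul_mul_comm, ha, one_mul, hb]

theorem conj_mul_self_eq_one_s16 (ha : a * a = 1) (hb : b * b = 1) : a * b * a * (a * b * a) = 1 := by
  rw [show a * b * a * (a * b * a) = a * (b * (a * a) * b) * a by group, ha, mul_one, hb,
    mul_one, ha]

theorem semiconjBy_mul_mul (ha : a * a = 1) (x : G) : SemiconjBy a x (a * x * a) := by
  rw [SemiconjBy, mul_assoc _ a a, ha, mul_one]

theorem semiconjBy_mul_mul_left (ha : a * a = 1) (x : G) : SemiconjBy a (a * x * a) x := by
  rw [SemiconjBy, ← mul_assoc, ← mul_assoc, ha, one_mul]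

theorem SemiconjBy.mul_mul_eq (h : SemiconjBy a x y) (ha : a * a = 1) : a * x * a = y := by
  rw [h.eq, mul_assoc, ha, mul_one]

theorem commute_mul_mul_of_braid (hab : a * b * a = b * a * b) (hb : Commute b x) :
    Commute a (b * (a * x * a) * b) := by
  calc a * (b * (a * x * a) * b) = a * b * a * x * a * b := by group
    _ = b * a * (b * x) * a * b := by rw [hab]; group
    _ = b * a * x * (b * a * b) := by rw [hb.eq]; group
    _ = b * (a * x * a) * b * a := by rw [← hab]; group

end Involutions

namespace CoxeterB

variable {G : Type*} [Group G]

structure Relations (n : ℕ) (s : ℕ → G) : Prop where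
  mul_self : ∀ i < n, s i * s i = 1
  commute : ∀ i j, i + 2 ≤ j → j < n → Commute (s i) (s j)
  braid : ∀ i, 1 ≤ i → i + 1 < n → s i * s (i + 1) * s i = s (i + 1) * s i * s (i + 1)
  braid_zero : s 0 * s 1 * s 0 * s 1 = s 1 * s 0 * s 1 * s 0

/-- `signChange s j` is `t_{j+1}`: it negates coordinate `j + 1`. -/
def signChange (s : ℕ → G) : ℕ → G
  | 0 => s 0
  | j + 1 => s (j + 1) * signChange s j * s (j + 1)

def cycle (s : ℕ → G) : ℕ → G
  | 0 => 1
  | k + 1 => s (k + 1) * cycle s k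

def reversal (s : ℕ → G) : ℕ → G
  | 0 => 1
  | k + 1 => reversal s k * cycle s k

def negPrefix (s : ℕ → G) : ℕ → G
  | 0 => 1
  | k + 1 => negPrefix s k * signChange s k

variable {n : ℕ} {s : ℕ → G} {x : G}

theorem commute_cycle {k : ℕ} (h : ∀ i, 1 ≤ i → i ≤ k → Commute x (s i)) :
    Commute x (cycle s k) := by
  induction k with
  | zero => exact Commute.one_right x
  | succ k ih =>
    exact (h (k + 1) (by omega) le_rfl).mul_right (ih fun i hi hik => h i hi (by omega))

theorem commute_reversal {k : ℕ} (h : ∀ i, 1 ≤ i → i < k → Commute x (s i)) :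
    Commute x (reversal s k) := by
  induction k with
  | zero => exact Commute.one_right x
  | succ k ih =>
    exact (ih fun i hi hik => h i hi (by omega)).mul_right
      (commute_cycle fun i hi hik => h i hi (by omega))

theorem commute_negPrefix {k : ℕ} (h : ∀ i < k, Commute x (signChange s i)) :
    Commute x (negPrefix s k) := by
  induction k with
  | zero => exact Commute.one_right x
  | succ k ih => exact (ih fun i hi => h i (by omega)).mul_right (h k (by omega))

namespace Relations

variable {i j k l m : ℕ}

theorem of_coxeter (hn : 2 ≤ n) (hB1 : ∀ i, i ≤ n - 1 → s i * s i = 1)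
    (hB2 : (s 0 * s 1) ^ 4 = 1) (hB3 : ∀ i, 1 ≤ i → i ≤ n - 2 → (s i * s (i + 1)) ^ 3 = 1)
    (hB4 : ∀ i j, i ≤ n - 3 → i + 2 ≤ j → j ≤ n - 1 → (s i * s j) ^ 2 = 1) :
    Relations n s where
  mul_self i hi := hB1 i (by omega)
  commute i j hij hj :=
    commute_of_involutions (hB1 i (by omega)) (hB1 j (by omega)) (hB4 i j (by omega) hij (by omega))
  braid i hi hin :=
    braid_of_involutions (hB1 i (by omega)) (hB1 (i + 1) (by omega)) (hB3 i hi (by omega))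
  braid_zero := braid_four_of_involutions (hB1 0 (by omega)) (hB1 1 (by omega)) hB2

theorem inv_eq (H : Relations n s) (hi : i < n) : (s i)⁻¹ = s i :=
  inv_eq_of_mul_eq_one_right (H.mul_self i hi)

theorem signChange_mul_self (H : Relations n s) (hk : k < n) :
    signChange s k * signChange s k = 1 := by
  induction k with
  | zero => exact H.mul_self 0 hk
  | succ k ih =>
    exact conj_mul_self_eq_one_s16 (H.mul_self _ hk) (ih (by omega))

theorem commute_s_signChange_of_lt (H : Relations n s) (hki : k + 2 ≤ i) (hi : i < n) :
    Commute (s i) (signChange s k) := by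
  induction k with
  | zero => exact (H.commute 0 i hki hi).symm
  | succ k ih =>
    have hc := (H.commute (k + 1) i hki hi).symm
    exact (hc.mul_right (ih (by omega))).mul_right hc

theorem commute_s_signChange_of_gt (H : Relations n s) (hik : i < k) (hk : k < n) :
    Commute (s i) (signChange s k) := by
  induction k with
  | zero => omega
  | succ k ih =>
    rcases Nat.lt_succ_iff_lt_or_eq.mp hik with hik | rfl
    · have hc := H.commute i (k + 1) (by omega) hk
      exact (hc.mul_right (ih hik (by omega))).mul_right hc
    · rcases i with _ | j
      · change Commute (s 0) (s 1 * s 0 * s 1)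
        rw [Commute, SemiconjBy, ← mul_assoc, ← mul_assoc, H.braid_zero]
      · exact commute_mul_mul_of_braid (H.braid (j + 1) (by omega) hk)
          (H.commute_s_signChange_of_lt le_rfl hk)

theorem semiconjBy_s_signChange (H : Relations n s) (hk : k + 1 < n) :
    SemiconjBy (s (k + 1)) (signChange s k) (signChange s (k + 1)) :=
  semiconjBy_mul_mul (H.mul_self _ hk) _

theorem semiconjBy_s_signChange_succ (H : Relations n s) (hk : k + 1 < n) :
    SemiconjBy (s (k + 1)) (signChange s (k + 1)) (signChange s k) :=
  semiconjBy_mul_mul_left (H.mul_self _ hk) _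

theorem commute_signChange_of_lt (H : Relations n s) (hjk : j < k) (hk : k < n) :
    Commute (signChange s j) (signChange s k) := by
  induction j with
  | zero => exact H.commute_s_signChange_of_gt hjk hk
  | succ j ih =>
    have hc := H.commute_s_signChange_of_gt hjk hk
    exact (hc.mul_left (ih (by omega))).mul_left hc

theorem commute_signChange (H : Relations n s) (hj : j < n) (hk : k < n) :
    Commute (signChange s j) (signChange s k) := by
  rcases lt_trichotomy j k with hjk | rfl | hkj
  · exact H.commute_signChange_of_lt hjk hk
  · exact Commute.refl _
  · exact (H.commute_signChange_of_lt hkj hj).symm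

theorem commute_s_cycle (H : Relations n s) (hki : k + 2 ≤ i) (hi : i < n) :
    Commute (s i) (cycle s k) :=
  commute_cycle fun j _ hjk => (H.commute j i (by omega) hi).symm

theorem semiconjBy_cycle_s (H : Relations n s) (hi : 1 ≤ i) (hik : i < k) (hk : k < n) :
    SemiconjBy (cycle s k) (s (i + 1)) (s i) := by
  induction k with
  | zero => omega
  | succ k ih =>
    rcases Nat.lt_succ_iff_lt_or_eq.mp hik with hik | rfl
    · exact SemiconjBy.mul_left (H.commute i (k + 1) (by omega) hk).symm (ih hik (by omega))
    · obtain ⟨j, rfl⟩ : ∃ j, i = j + 1 := ⟨i - 1, by omega⟩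
      have hb := H.braid (j + 1) hi hk
      have hc := H.commute_s_cycle (k := j) le_rfl hk
      change s (j + 2) * (s (j + 1) * cycle s j) * s (j + 2)
        = s (j + 1) * (s (j + 2) * (s (j + 1) * cycle s j))
      calc s (j + 2) * (s (j + 1) * cycle s j) * s (j + 2)
          = s (j + 2) * s (j + 1) * (cycle s j * s (j + 2)) := by group
        _ = s (j + 1) * (s (j + 2) * (s (j + 1) * cycle s j)) := by
          rw [← hc.eq, ← mul_assoc, ← hb]; group

theorem commute_cycle_signChange (H : Relations n s) (hkm : k < m) (hm : m < n) :
    Commute (cycle s k) (signChange s m) :=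
  (commute_cycle fun _ _ hik => (H.commute_s_signChange_of_gt (by omega) hm).symm).symm

theorem semiconjBy_cycle_signChange_succ (H : Relations n s) (hik : i < k) (hk : k < n) :
    SemiconjBy (cycle s k) (signChange s (i + 1)) (signChange s i) := by
  induction k with
  | zero => omega
  | succ k ih =>
    rcases Nat.lt_succ_iff_lt_or_eq.mp hik with hik | rfl
    · exact SemiconjBy.mul_left (H.commute_s_signChange_of_lt (by omega) hk) (ih hik (by omega))
    · exact (H.semiconjBy_s_signChange_succ hk).mul_left
        (H.commute_cycle_signChange (Nat.lt_succ_self i) hk)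

theorem commute_s_reversal (H : Relations n s) (hki : k < i) (hi : i < n) :
    Commute (s i) (reversal s k) :=
  commute_reversal fun j _ hjk => (H.commute j i (by omega) hi).symm

theorem reversal_succ_eq_inv_mul (H : Relations n s) (hk : k < n) :
    reversal s (k + 1) = (cycle s k)⁻¹ * reversal s k := by
  induction k with
  | zero => simp [reversal, cycle]
  | succ k ih =>
    have hc := H.commute_s_reversal (k := k) (Nat.lt_succ_self k) hk
    calc reversal s (k + 2) = (cycle s k)⁻¹ * (reversal s k * s (k + 1)) * cycle s k := by
          rw [reversal, ih (by omega), cycle]; group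
      _ = (s (k + 1) * cycle s k)⁻¹ * (reversal s k * cycle s k) := by
          rw [← hc.eq, mul_inv_rev, H.inv_eq hk]; group

theorem reversal_mul_self (H : Relations n s) (hk : k ≤ n) : reversal s k * reversal s k = 1 := by
  induction k with
  | zero => exact mul_one (1 : G)
  | succ k ih =>
    calc reversal s (k + 1) * reversal s (k + 1)
        = (cycle s k)⁻¹ * (reversal s k * reversal s k) * cycle s k := by
          nth_rw 1 [H.reversal_succ_eq_inv_mul hk]; rw [reversal]; group
      _ = 1 := by rw [ih (by omega), mul_one, inv_mul_cancel]

theorem semiconjBy_reversal_s (H : Relations n s) (hk : k ≤ n) (hi : 1 ≤ i) (hik : i < k) :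
    SemiconjBy (reversal s k) (s i) (s (k - i)) := by
  induction k generalizing i with
  | zero => omega
  | succ k ih =>
    rcases Nat.lt_succ_iff_lt_or_eq.mp hik with hik | rfl
    · rw [H.reversal_succ_eq_inv_mul hk, show k + 1 - i = k - i + 1 by omega]
      exact (H.semiconjBy_cycle_s (i := k - i) (by omega) (by omega) hk).inv_symm_left.mul_left
        (ih (by omega) hi hik)
    · rw [reversal, Nat.add_sub_cancel_left]
      obtain ⟨j, rfl⟩ : ∃ j, i = j + 1 := ⟨i - 1, by omega⟩
      rcases j with _ | j
      · simp [reversal, cycle, SemiconjBy]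
      · have h := ih (i := j + 1) (by omega) (by omega) (Nat.lt_succ_self _)
        rw [Nat.add_sub_cancel_left] at h
        exact h.mul_left (H.semiconjBy_cycle_s (by omega) (Nat.lt_succ_self _) (by omega))

theorem semiconjBy_reversal_signChange_zero (H : Relations n s) (hk : k < n) :
    SemiconjBy (reversal s (k + 1)) (signChange s 0) (signChange s k) := by
  induction k with
  | zero => simp [reversal, cycle]
  | succ k ih =>
    rw [H.reversal_succ_eq_inv_mul hk]
    exact (H.semiconjBy_cycle_signChange_succ (Nat.lt_succ_self k) hk).inv_symm_left.mul_left
      (ih (by omega))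

theorem commute_reversal_signChange (H : Relations n s) (hkm : k ≤ m) (hm : m < n) :
    Commute (reversal s k) (signChange s m) :=
  (commute_reversal fun _ _ hik => (H.commute_s_signChange_of_gt (by omega) hm).symm).symm

theorem commute_negPrefix_signChange (H : Relations n s) (hk : k ≤ n) (hm : m < n) :
    Commute (negPrefix s k) (signChange s m) :=
  (commute_negPrefix fun _ _ => H.commute_signChange hm (by omega)).symm

theorem negPrefix_mul_self (H : Relations n s) (hk : k ≤ n) :
    negPrefix s k * negPrefix s k = 1 := by
  induction k with
  | zero => exact mul_one (1 : G)
  | succ k ih =>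
    exact (H.commute_negPrefix_signChange (m := k) (by omega) hk).mul_mul_self_eq_one
      (ih (by omega)) (H.signChange_mul_self hk)

theorem commute_s_negPrefix_of_lt (H : Relations n s) (hki : k < i) (hi : i < n) :
    Commute (s i) (negPrefix s k) :=
  commute_negPrefix fun _ _ => H.commute_s_signChange_of_lt (by omega) hi

theorem commute_s_negPrefix_of_gt (H : Relations n s) (hi : 1 ≤ i) (hik : i < k) (hk : k ≤ n) :
    Commute (s i) (negPrefix s k) := by
  induction k with
  | zero => omega
  | succ k ih =>
    rcases Nat.lt_succ_iff_lt_or_eq.mp hik with hik | rfl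
    · exact (ih hik (by omega)).mul_right (H.commute_s_signChange_of_gt hik (by omega))
    · obtain ⟨j, rfl⟩ : ∃ j, i = j + 1 := ⟨i - 1, by omega⟩
      have hswap := (H.semiconjBy_s_signChange (k := j) (by omega)).mul_right
        (H.semiconjBy_s_signChange_succ (by omega))
      rw [← (H.commute_signChange_of_lt (Nat.lt_succ_self j) (by omega)).eq] at hswap
      change Commute (s (j + 1)) (negPrefix s j * signChange s j * signChange s (j + 1))
      rw [mul_assoc]
      exact (H.commute_s_negPrefix_of_lt (Nat.lt_succ_self j) (by omega)).mul_right hswap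

theorem commute_reversal_negPrefix (H : Relations n s) (hk : k ≤ n) :
    Commute (reversal s k) (negPrefix s k) :=
  (commute_reversal fun _ hi hik => (H.commute_s_negPrefix_of_gt hi hik hk).symm).symm

theorem negPrefix_mul_cycle (H : Relations n s) (hk : k < n) :
    negPrefix s k * (cycle s k * s 0) = cycle s k * negPrefix s (k + 1) := by
  induction k with
  | zero => simp [negPrefix, cycle, signChange]
  | succ k ih =>
    have h1 := (H.semiconjBy_s_signChange_succ hk).eq
    have h2 := (H.commute_s_negPrefix_of_lt (Nat.lt_succ_self k) hk).eq
    have h3 := (H.commute_cycle_signChange (Nat.lt_succ_self k) hk).eq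
    have h4 : s 0 * signChange s (k + 1) = signChange s (k + 1) * s 0 :=
      (H.commute_signChange_of_lt (Nat.succ_pos k) hk).eq
    calc negPrefix s (k + 1) * (cycle s (k + 1) * s 0)
        = negPrefix s k * (signChange s k * s (k + 1)) * (cycle s k * s 0) := by
          rw [negPrefix, cycle]; group
      _ = negPrefix s k * s (k + 1) * signChange s (k + 1) * (cycle s k * s 0) := by
          rw [← h1]; group
      _ = s (k + 1) * negPrefix s k * (signChange s (k + 1) * cycle s k) * s 0 := by
          rw [← h2]; group
      _ = s (k + 1) * negPrefix s k * cycle s k * (signChange s (k + 1) * s 0) := by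
          rw [← h3]; group
      _ = s (k + 1) * (negPrefix s k * (cycle s k * s 0)) * signChange s (k + 1) := by
          rw [← h4]; group
      _ = cycle s (k + 1) * negPrefix s (k + 1 + 1) := by
          rw [ih (by omega)]; simp only [cycle, negPrefix]; group

end Relations

theorem rwordB_succ (s : ℕ → G) (k : ℕ) :
    rwordB s (k + 1) = rwordB s k * (cycle s k * s 0) := by
  have hblock : ∀ j, ((List.range (j + 1)).map fun i => s (j - i)).prod = cycle s j * s 0 := by
    intro j
    induction j with
    | zero => simp [cycle]
    | succ j ih =>
      rw [List.range_succ_eq_map, List.map_cons, List.map_map, List.prod_cons]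
      have hshift : ((fun i => s (j + 1 - i)) ∘ Nat.succ) = fun i => s (j - i) := by
        funext i; simp
      rw [hshift, ih, cycle, Nat.sub_zero, mul_assoc]
  unfold rwordB
  rw [List.range_succ, List.map_append, List.prod_append, List.map_singleton,
    List.prod_singleton, hblock]

theorem rwordB_one (s : ℕ → G) : rwordB s 1 = s 0 := by
  simp [rwordB]

namespace Relations

theorem rwordB_eq_reversal_mul_negPrefix (H : Relations n s) (hk : k ≤ n) :
    rwordB s k = reversal s k * negPrefix s k := by
  induction k with
  | zero => simp [rwordB, reversal, negPrefix]
  | succ k ih =>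
    rw [rwordB_succ, ih (by omega), mul_assoc, H.negPrefix_mul_cycle hk, ← mul_assoc,
      ← reversal]

theorem rwordB_mul_self (H : Relations n s) (hk : k ≤ n) : rwordB s k * rwordB s k = 1 := by
  rw [H.rwordB_eq_reversal_mul_negPrefix hk]
  exact (H.commute_reversal_negPrefix hk).mul_mul_self_eq_one (H.reversal_mul_self hk)
    (H.negPrefix_mul_self hk)

theorem rwordB_conj_s (H : Relations n s) (hk : k ≤ n) (hi : 1 ≤ i) (hik : i < k) :
    rwordB s k * s i * rwordB s k = s (k - i) := by
  refine SemiconjBy.mul_mul_eq ?_ (H.rwordB_mul_self hk)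
  rw [H.rwordB_eq_reversal_mul_negPrefix hk]
  exact (H.semiconjBy_reversal_s hk hi hik).mul_left (H.commute_s_negPrefix_of_gt hi hik hk).symm

theorem rwordB_conj_s_zero (H : Relations n s) (hk : k < n) :
    rwordB s (k + 1) * s 0 * rwordB s (k + 1) = signChange s k := by
  refine SemiconjBy.mul_mul_eq ?_ (H.rwordB_mul_self hk)
  rw [H.rwordB_eq_reversal_mul_negPrefix hk]
  exact (H.semiconjBy_reversal_signChange_zero hk).mul_left
    (H.commute_negPrefix_signChange (m := 0) hk (by omega))

theorem commute_rwordB_signChange (H : Relations n s) (hkm : k ≤ m) (hm : m < n) :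
    Commute (rwordB s k) (signChange s m) := by
  rw [H.rwordB_eq_reversal_mul_negPrefix (by omega)]
  exact (H.commute_reversal_signChange hkm hm).mul_left
    (H.commute_negPrefix_signChange (by omega) hm)

theorem rwordB_mul_rwordB_succ (H : Relations n s) (hk : k + 1 ≤ n) :
    rwordB s k * rwordB s (k + 1) = cycle s k * s 0 := by
  rw [rwordB_succ, ← mul_assoc, H.rwordB_mul_self (by omega), one_mul]

theorem rwordB_succ_mul_rwordB (H : Relations n s) (hk : k + 1 ≤ n) :
    rwordB s (k + 1) * rwordB s k = (cycle s k * s 0)⁻¹ := by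
  rw [← H.rwordB_mul_rwordB_succ hk, mul_inv_rev,
    inv_eq_of_mul_eq_one_right (H.rwordB_mul_self hk),
    inv_eq_of_mul_eq_one_right (H.rwordB_mul_self (by omega))]

theorem rwordB_zigzag (H : Relations n s) (hm : m + 2 ≤ n) :
    rwordB s m * rwordB s (m + 1) * (rwordB s (m + 2) * rwordB s (m + 1)) = s (m + 1) := by
  calc _ = (s (m + 1))⁻¹ := by
        rw [H.rwordB_mul_rwordB_succ (by omega), H.rwordB_succ_mul_rwordB hm, cycle]; group
    _ = s (m + 1) := H.inv_eq (by omega)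

theorem rwordB_zigzag_rev (H : Relations n s) (hm : m + 2 ≤ n) :
    rwordB s (m + 1) * rwordB s (m + 2) * (rwordB s (m + 1) * rwordB s m) = s (m + 1) := by
  rw [H.rwordB_mul_rwordB_succ hm, H.rwordB_succ_mul_rwordB (by omega), cycle]
  group

theorem rwordB_one_two_one (H : Relations n s) (hn : 2 ≤ n) :
    rwordB s 1 * rwordB s 2 * rwordB s 1 = s 1 := by
  have h12 : rwordB s 1 * rwordB s 2 = cycle s 1 * s 0 := H.rwordB_mul_rwordB_succ hn
  rw [h12, rwordB_one, mul_assoc, H.mul_self 0 (by omega), mul_one, cycle, cycle, mul_one]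

theorem rwordB_Rb2 (H : Relations n s) (hn : 3 ≤ n) : (rwordB s 2 * rwordB s 3) ^ 6 = 1 := by
  have h23 : rwordB s 2 * rwordB s 3 = cycle s 2 * s 0 := H.rwordB_mul_rwordB_succ hn
  have hm1 : cycle s 2 * signChange s 1 = signChange s 0 * cycle s 2 :=
    (H.semiconjBy_cycle_signChange_succ (by norm_num) (by omega)).eq
  have hm2 : cycle s 2 * signChange s 2 = signChange s 1 * cycle s 2 :=
    (H.semiconjBy_cycle_signChange_succ (by norm_num) (by omega)).eq
  -- `w = s₂ s₁` has order 3 and shifts the sign changes, so `(w s₀)³ = t₃ t₂ t₁`.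
  set w := cycle s 2 with hw
  have hw3 : w * w * w = 1 := by
    have hb : s 1 * s 2 * s 1 = s 2 * s 1 * s 2 := H.braid 1 le_rfl (by omega)
    calc w * w * w = s 2 * s 1 * s 2 * (s 1 * s 2 * s 1) := by simp only [hw, cycle]; group
      _ = 1 := by
        rw [hb]; exact conj_mul_self_eq_one_s16 (H.mul_self 2 (by omega)) (H.mul_self 1 (by omega))
  have hcube : (w * s 0) ^ 3 = signChange s 2 * signChange s 1 * signChange s 0 := by
    calc (w * s 0) ^ 3 = w * (signChange s 0 * w) * (signChange s 0 * w) * signChange s 0 := by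
          simp only [pow_succ, pow_zero, one_mul, signChange]; group
      _ = w * w * (signChange s 1 * w) * signChange s 1 * signChange s 0 := by
          rw [← hm1]; group
      _ = w * w * w * (signChange s 2 * signChange s 1 * signChange s 0) := by
          rw [← hm2]; group
      _ = signChange s 2 * signChange s 1 * signChange s 0 := by rw [hw3, one_mul]
  have c21 := H.commute_signChange (j := 2) (k := 1) (by omega) (by omega)
  have c0 := (H.commute_signChange (j := 2) (k := 0) (by omega) (by omega)).mul_left
    (H.commute_signChange (j := 1) (k := 0) (by omega) (by omega))
  rw [h23, show 6 = 3 * 2 from rfl, pow_mul, hcube, sq]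
  exact c0.mul_mul_self_eq_one
    (c21.mul_mul_self_eq_one (H.signChange_mul_self (by omega)) (H.signChange_mul_self (by omega)))
    (H.signChange_mul_self (by omega))

theorem rwordB_Rb3 (H : Relations n s) (hk : 2 ≤ k) (hkn : k ≤ n) :
    (rwordB s 1 * rwordB s k) ^ 4 = 1 := by
  obtain ⟨m, rfl⟩ : ∃ m, k = m + 1 := ⟨k - 1, by omega⟩
  have hsq : rwordB s 1 * rwordB s (m + 1) * (rwordB s 1 * rwordB s (m + 1))
      = s 0 * signChange s m := by
    rw [rwordB_one, ← H.rwordB_conj_s_zero (by omega)]; group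
  have hc : Commute (s 0) (signChange s m) :=
    H.commute_signChange_of_lt (j := 0) (by omega) (by omega)
  rw [show 4 = 2 * 2 from rfl, pow_mul, sq (rwordB s 1 * rwordB s (m + 1)), hsq, sq]
  exact hc.mul_mul_self_eq_one (H.mul_self 0 (by omega)) (H.signChange_mul_self (by omega))

theorem rwordB_Rb4 (H : Relations n s) (hk : 4 ≤ k) (hkn : k ≤ n) :
    (rwordB s 1 * rwordB s 2 * rwordB s 1 * rwordB s k) ^ 4 = 1 := by
  have hsq : s 1 * rwordB s k * (s 1 * rwordB s k) = s 1 * s (k - 1) := by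
    rw [← H.rwordB_conj_s hkn le_rfl (by omega)]; group
  rw [H.rwordB_one_two_one (by omega), show 4 = 2 * 2 from rfl, pow_mul, sq (s 1 * rwordB s k),
    hsq, sq]
  exact (H.commute 1 (k - 1) (by omega) (by omega)).mul_mul_self_eq_one
    (H.mul_self 1 (by omega)) (H.mul_self _ (by omega))

theorem rwordB_Rb5 (H : Relations n s) (hk : 3 ≤ k) (hkn : k ≤ n) :
    (rwordB s k * rwordB s 1 * rwordB s k * rwordB s 2) ^ 2 = 1 := by
  obtain ⟨m, rfl⟩ : ∃ m, k = m + 1 := ⟨k - 1, by omega⟩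
  rw [rwordB_one, H.rwordB_conj_s_zero (by omega), sq]
  exact (H.commute_rwordB_signChange (k := 2) (by omega) (by omega)).symm.mul_mul_self_eq_one
    (H.signChange_mul_self (by omega)) (H.rwordB_mul_self (by omega))

theorem rwordB_Rb6 (H : Relations n s) (hk : 2 ≤ k) (hkn : k ≤ n - 1) :
    rwordB s k * rwordB s 1 * rwordB s 2 * rwordB s 1 * rwordB s k * rwordB s (k + 1) *
      rwordB s 2 * rwordB s 3 * rwordB s 2 * rwordB s 1 * rwordB s (k + 1) = 1 := by
  have h2321 : rwordB s 2 * rwordB s 3 * (rwordB s 2 * rwordB s 1) = s 2 :=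
    H.rwordB_zigzag_rev (m := 1) (by omega)
  calc _ = rwordB s k * (rwordB s 1 * rwordB s 2 * rwordB s 1) * rwordB s k *
        (rwordB s (k + 1) * (rwordB s 2 * rwordB s 3 * (rwordB s 2 * rwordB s 1)) *
          rwordB s (k + 1)) := by group
    _ = s (k - 1) * s (k - 1) := by
      rw [H.rwordB_one_two_one (by omega), h2321, H.rwordB_conj_s (by omega) le_rfl (by omega),
        H.rwordB_conj_s (by omega) (by omega) (by omega), show k + 1 - 2 = k - 1 by omega]
    _ = 1 := H.mul_self _ (by omega)

theorem rwordB_Rb7 (H : Relations n s) (hk : 2 ≤ k) (hkn : k ≤ n - 1) :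
    rwordB s (k + 1) * rwordB s 1 * rwordB s 2 * rwordB s 1 * rwordB s (k + 1) *
      rwordB s (k - 1) * rwordB s k * rwordB s (k + 1) * rwordB s k = 1 := by
  obtain ⟨m, rfl⟩ : ∃ m, k = m + 1 := ⟨k - 1, by omega⟩
  rw [Nat.add_sub_cancel, show m + 1 + 1 = m + 2 from rfl]
  calc _ = rwordB s (m + 2) * (rwordB s 1 * rwordB s 2 * rwordB s 1) * rwordB s (m + 2) *
        (rwordB s m * rwordB s (m + 1) * (rwordB s (m + 2) * rwordB s (m + 1))) := by group
    _ = s (m + 1) * s (m + 1) := by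
      rw [H.rwordB_one_two_one (by omega), H.rwordB_conj_s (by omega) le_rfl (by omega),
        H.rwordB_zigzag (by omega), show m + 2 - 1 = m + 1 by omega]
    _ = 1 := H.mul_self _ (by omega)

theorem rwordB_Rb8 (H : Relations n s) (hk : 2 ≤ k) (hkl : k + 2 ≤ l)
    (hl : l ≤ n) :
    rwordB s k * rwordB s 1 * rwordB s 2 * rwordB s 1 * rwordB s k * rwordB s l *
      rwordB s (l - k + 2) * rwordB s 1 * rwordB s 2 * rwordB s 1 * rwordB s (l - k + 2) *
        rwordB s l = 1 := by
  calc _ = rwordB s k * (rwordB s 1 * rwordB s 2 * rwordB s 1) * rwordB s k *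
        (rwordB s l * (rwordB s (l - k + 2) * (rwordB s 1 * rwordB s 2 * rwordB s 1) *
          rwordB s (l - k + 2)) * rwordB s l) := by group
    _ = s (k - 1) * s (k - 1) := by
      rw [H.rwordB_one_two_one (by omega), H.rwordB_conj_s (by omega) le_rfl (by omega),
        H.rwordB_conj_s (by omega) le_rfl (by omega), show l - k + 2 - 1 = l - k + 1 by omega,
        H.rwordB_conj_s hl (by omega) (by omega), show l - (l - k + 1) = k - 1 by omega]
    _ = 1 := H.mul_self _ (by omega)

end Relations
end CoxeterB

theorem stmt16 (n : ℕ) (hn : 3 < n) (G : Type*) [Group G] (s : ℕ → G)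
    (hB1 : ∀ i, i ≤ n - 1 → s i * s i = 1)
    (hB2 : (s 0 * s 1) ^ 4 = 1)
    (hB3 : ∀ i, 1 ≤ i → i ≤ n - 2 → (s i * s (i + 1)) ^ 3 = 1)
    (hB4 : ∀ i j, i ≤ n - 3 → i + 2 ≤ j → j ≤ n - 1 → (s i * s j) ^ 2 = 1) :
    let r : ℕ → G := rwordB s
    (∀ k, 1 ≤ k → k ≤ n → r k * r k = 1) ∧
    ((r 2 * r 3) ^ 6 = 1) ∧
    (∀ k, 2 ≤ k → k ≤ n → (r 1 * r k) ^ 4 = 1) ∧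
    (∀ k, 4 ≤ k → k ≤ n → (r 1 * r 2 * r 1 * r k) ^ 4 = 1) ∧
    (∀ k, 3 ≤ k → k ≤ n → (r k * r 1 * r k * r 2) ^ 2 = 1) ∧
    (∀ k, 2 ≤ k → k ≤ n - 1 →
      r k * r 1 * r 2 * r 1 * r k * r (k + 1) * r 2 * r 3 * r 2 * r 1 * r (k + 1) = 1) ∧
    (∀ k, 2 ≤ k → k ≤ n - 1 →
      r (k + 1) * r 1 * r 2 * r 1 * r (k + 1) * r (k - 1) * r k * r (k + 1) * r k = 1) ∧
    (∀ k l, 2 ≤ k → k ≤ n - 2 → k + 2 ≤ l → l ≤ n →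
      r k * r 1 * r 2 * r 1 * r k * r l * r (l - k + 2) * r 1 * r 2 * r 1 * r (l - k + 2) * r l = 1) := by
  have H : CoxeterB.Relations n s := .of_coxeter (by omega) hB1 hB2 hB3 hB4
  exact ⟨fun _ _ hk => H.rwordB_mul_self hk, H.rwordB_Rb2 (by omega),
    fun _ => H.rwordB_Rb3, fun _ => H.rwordB_Rb4, fun _ => H.rwordB_Rb5, fun _ => H.rwordB_Rb6,
    fun _ => H.rwordB_Rb7, fun _ _ hk _ => H.rwordB_Rb8 hk⟩
end

section
/- Let n > 3, let G be a group, and let r̄_2, r_2, …, r_n ∈ G satisfy the relations (Rd1)–(Rd10). Then the elements s_0' := r̄_2 and s_i := r_{i+1} r_2 r_{i+1} for i ∈ [1,n-1] satisfy the type D Coxeter relations: s_i^2 = 1 for i ∈ [1,n-1]; (s_0')^2 = 1; (s_0' s_2)^3 = 1; (s_i s_{i+1})^3 = 1 for i ∈ [1,n-2]; (s_0' s_i)^2 = 1 for i ∈ {1} ∪ [3,n-1]; and (s_i s_j)^2 = 1 for i ∈ [1,n-1] and j ∈ [i+2,n-1]. -/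
/-!
Write `s_i = r_{i+1} r_2 r_{i+1}`. Relation (Rd10) says that conjugation by `r_{a+b}` exchanges
`s_a` and `s_b` whenever `a, b ≥ 2` and `a + b ≥ 5`. Hence (directly if `i = 1`, as `s_1 = r_2`)
for `1 ≤ i < j` with `(i, j) ≠ (2, 3)` the product `s_i s_j` is conjugate, by `r_{j+1}`, to
`(r_{j+2-i} r_2)^2`, whose order divides `3` when `j = i + 1` by (Rd4) and `2` when `j ≥ i + 2`
by (Rd5). In the remaining braid relation `(s_2 s_3)^3 = 1`, relations (Rd8), (Rd9) and
`(r_2 r_4)^4 = 1` force `r_4` to commute with `s_2`, so that `s_2 s_3` is conjugate by `r_4` to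
`(r_3 r_2)^2`. The relations involving `r̄_2` are (Rd1), (Rd3), (Rd6) and (Rd7) rewritten.
-/

section Involution

variable {G : Type*} [Group G] {a b t u v x y z : G}

theorem conj_pow_of_mul_self_eq_one (ht : t * t = 1) (x : G) (m : ℕ) :
    (t * x * t) ^ m = t * x ^ m * t := by
  simpa only [inv_eq_of_mul_eq_one_right ht] using conj_pow (a := t) (b := x) (i := m)

theorem conj_mul_self_eq_one_s17 (ht : t * t = 1) (hz : z * z = 1) : t * z * t * (t * z * t) = 1 := by
  rw [← sq, conj_pow_of_mul_self_eq_one ht, sq, hz, mul_one, ht]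

theorem conj_eq_iff_eq_conj (ht : t * t = 1) : t * x * t = y ↔ x = t * y * t := by
  constructor <;> rintro rfl
  · calc x = t * t * x * (t * t) := by rw [ht, one_mul, mul_one]
      _ = t * (t * x * t) * t := by group
  · calc t * (t * y * t) * t = t * t * y * (t * t) := by group
      _ = y := by rw [ht, one_mul, mul_one]

theorem pow_eq_one_of_pow_mul_comm {m : ℕ} (h : (a * b) ^ m = 1) : (b * a) ^ m = 1 := by
  have := mul_pow_mul a b m
  rwa [h, one_mul, left_eq_mul] at this

theorem conj_mul_conj_pow_three_eq_one (hz : z * z = 1) (hu : u * u = 1) (hv : v * v = 1)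
    (hzu : (z * u) ^ 3 = 1) (hzv : (z * v) ^ 4 = 1) (h8 : u * z * v * z * v * u * v = 1)
    (h9 : (u * z) ^ 2 * v * u * v * z * v = 1) :
    (u * z * u * (v * z * v)) ^ 3 = 1 := by
  have hz' := inv_eq_of_mul_eq_one_right hz
  have hu' := inv_eq_of_mul_eq_one_right hu
  have hv' := inv_eq_of_mul_eq_one_right hv
  have huz : (u * z) ^ 3 = 1 := pow_eq_one_of_pow_mul_comm hzu
  have hvzv : v * z * v = z * u * v * u :=
    calc v * z * v = z⁻¹ * u⁻¹ * (u * z * v * z * v * u * v) * v⁻¹ * u⁻¹ := by group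
      _ = z * u * v * u := by rw [h8, hz', hu', hv']; group
  have hvu : v * u = u * z * v * z * v :=
    calc v * u = u * z * ((u * z) ^ 3)⁻¹ * ((u * z) ^ 2 * v * u * v * z * v) * v⁻¹ * z⁻¹ * v⁻¹ := by
          simp only [pow_succ, pow_zero, one_mul]; group
      _ = u * z * v * z * v := by rw [huz, h9, hz', hv']; group
  have hvz : v * z * v * z = z * v * z * v :=
    calc v * z * v * z = v⁻¹ * z⁻¹ * v⁻¹ * z⁻¹ := by rw [hz', hv']
      _ = (z * v) ^ 4 * v⁻¹ * z⁻¹ * v⁻¹ * z⁻¹ := by rw [hzv, one_mul]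
      _ = z * v * z * v := by simp only [pow_succ, pow_zero, one_mul]; group
  have hcomm : v * (u * z * u) * v = u * z * u :=
    calc v * (u * z * u) * v = v * u * z * (u * v) := by group
      _ = u * z * (v * z * v * z) * (u * v) := by rw [hvu]; group
      _ = u * (z * z) * (v * z * v) * (u * v) := by rw [hvz]; group
      _ = u * z * u * v * (u * u) * v := by rw [hz, hvzv]; group
      _ = u * z * u := by rw [hu, mul_one, mul_assoc, hv, mul_one]
  calc (u * z * u * (v * z * v)) ^ 3 = (v * (u * z * u) * v * (v * z * v)) ^ 3 := by rw [hcomm]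
    _ = (v * (u * z * u) * (v * v) * z * v) ^ 3 := by group
    _ = (v * (u * z * u * z) * v) ^ 3 := by rw [hv]; group
    _ = v * ((u * z) ^ 3) ^ 2 * v := by
        rw [conj_pow_of_mul_self_eq_one hv, show u * z * u * z = (u * z) ^ 2 by rw [sq, ← mul_assoc],
          ← pow_mul, pow_mul']
    _ = 1 := by rw [huz, one_pow, mul_one, hv]

end Involution

section TypeDGenerators

variable {G : Type*} [Group G] {n : ℕ} {r : ℕ → G}

def typeDGen (r : ℕ → G) (i : ℕ) : G := r (i + 1) * r 2 * r (i + 1)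

theorem typeDGen_one (hz : r 2 * r 2 = 1) : typeDGen r 1 = r 2 := by
  show r 2 * r 2 * r 2 = r 2
  rw [hz, one_mul]

theorem conj_typeDGen (hinv : ∀ k, 2 ≤ k → k ≤ n → r k * r k = 1)
    (hRd10 : ∀ l k, 4 ≤ l → l ≤ n → 3 ≤ k → k ≤ l - 2 →
      r l * r (l - k + 2) * r 2 * r (l - k + 2) * r l * r k * r 2 * r k = 1)
    {a b : ℕ} (ha : 2 ≤ a) (hb : 2 ≤ b) (hab : 5 ≤ a + b) (habn : a + b ≤ n) :
    r (a + b) * typeDGen r a * r (a + b) = typeDGen r b := by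
  have hz := hinv 2 le_rfl (by omega)
  have key : ∀ c d, 3 ≤ c → 2 ≤ d → c + d = a + b →
      r (a + b) * typeDGen r c * r (a + b) = typeDGen r d := by
    intro c d hc hd hcd
    have h := hRd10 (a + b) (d + 1) (by omega) habn (by omega) (by omega)
    rw [show a + b - (d + 1) + 2 = c + 1 by omega] at h
    refine (eq_inv_of_mul_eq_one_left ?_).trans
      (inv_eq_of_mul_eq_one_right (conj_mul_self_eq_one_s17 (hinv (d + 1) (by omega) (by omega)) hz))
    simpa only [typeDGen, mul_assoc] using h
  rcases (by omega : 3 ≤ a ∨ a = 2) with ha3 | rfl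
  · exact key a b ha3 hb rfl
  · exact ((conj_eq_iff_eq_conj (hinv _ (by omega) habn)).mp (key b 2 (by omega) le_rfl
      (add_comm _ _))).symm

theorem typeDGen_mul_typeDGen_pow (hinv : ∀ k, 2 ≤ k → k ≤ n → r k * r k = 1)
    (hRd10 : ∀ l k, 4 ≤ l → l ≤ n → 3 ≤ k → k ≤ l - 2 →
      r l * r (l - k + 2) * r 2 * r (l - k + 2) * r l * r k * r 2 * r k = 1)
    {i j : ℕ} (hi : 1 ≤ i) (hij : i < j) (hjn : j + 1 ≤ n) (h23 : i = 1 ∨ 4 ≤ j) (m : ℕ) :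
    (typeDGen r i * typeDGen r j) ^ m = r (j + 1) * (r (j + 2 - i) * r 2) ^ (2 * m) * r (j + 1) := by
  have hz := hinv 2 le_rfl (by omega)
  have ht := hinv (j + 1) (by omega) hjn
  suffices h : typeDGen r i * typeDGen r j = r (j + 1) * (r (j + 2 - i) * r 2) ^ 2 * r (j + 1) by
    rw [h, conj_pow_of_mul_self_eq_one ht, ← pow_mul]
  rcases hi.eq_or_lt with rfl | hi2
  · rw [typeDGen_one hz, show j + 2 - 1 = j + 1 by omega, typeDGen, sq]
    calc r 2 * (r (j + 1) * r 2 * r (j + 1))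
        = r (j + 1) * r (j + 1) * (r 2 * (r (j + 1) * r 2 * r (j + 1))) := by rw [ht, one_mul]
      _ = _ := by group
  · have h := conj_typeDGen hinv hRd10 (a := j + 1 - i) (b := i) (by omega) (by omega) (by omega)
      (by omega)
    rw [show j + 1 - i + i = j + 1 by omega] at h
    rw [← h, typeDGen, typeDGen, show j + 1 - i + 1 = j + 2 - i by omega, sq]
    calc r (j + 1) * (r (j + 2 - i) * r 2 * r (j + 2 - i)) * r (j + 1) * (r (j + 1) * r 2 * r (j + 1))
        = r (j + 1) * (r (j + 2 - i) * r 2 * r (j + 2 - i)) * (r (j + 1) * r (j + 1)) * r 2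
          * r (j + 1) := by group
      _ = _ := by rw [ht, mul_one]; group

theorem typeDGen_braid (hinv : ∀ k, 2 ≤ k → k ≤ n → r k * r k = 1)
    (hRd4 : (r 2 * r 3) ^ 3 = 1)
    (hRd5 : ∀ k, 4 ≤ k → k ≤ n → (r 2 * r k) ^ 4 = 1)
    (hRd8 : ∀ k, 3 ≤ k → k ≤ n - 1 →
      r k * r (k - 1) * r (k + 1) * r 2 * r (k + 1) * r k * r (k + 1) = 1)
    (hRd9 : ∀ k, 3 ≤ k → k ≤ n - 1 →
      (r k * r (k - 1)) ^ 2 * r (k + 1) * r 3 * r (k + 1) * r (k - 1) * r (k + 1) = 1)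
    (hRd10 : ∀ l k, 4 ≤ l → l ≤ n → 3 ≤ k → k ≤ l - 2 →
      r l * r (l - k + 2) * r 2 * r (l - k + 2) * r l * r k * r 2 * r k = 1)
    {i : ℕ} (hi : 1 ≤ i) (hin : i + 2 ≤ n) :
    (typeDGen r i * typeDGen r (i + 1)) ^ 3 = 1 := by
  rcases (by omega : i = 2 ∨ i = 1 ∨ 4 ≤ i + 1) with rfl | h23
  · exact conj_mul_conj_pow_three_eq_one (hinv 2 le_rfl (by omega)) (hinv 3 (by omega) (by omega))
      (hinv 4 (by omega) hin) hRd4 (hRd5 4 le_rfl hin) (hRd8 3 le_rfl (by omega))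
      (hRd9 3 le_rfl (by omega))
  · rw [typeDGen_mul_typeDGen_pow hinv hRd10 hi (by omega) (by omega) h23,
      show i + 1 + 2 - i = 3 by omega, pow_mul', pow_eq_one_of_pow_mul_comm hRd4, one_pow, mul_one,
      hinv (i + 1 + 1) (by omega) (by omega)]

theorem typeDGen_comm (hinv : ∀ k, 2 ≤ k → k ≤ n → r k * r k = 1)
    (hRd5 : ∀ k, 4 ≤ k → k ≤ n → (r 2 * r k) ^ 4 = 1)
    (hRd10 : ∀ l k, 4 ≤ l → l ≤ n → 3 ≤ k → k ≤ l - 2 →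
      r l * r (l - k + 2) * r 2 * r (l - k + 2) * r l * r k * r 2 * r k = 1)
    {i j : ℕ} (hi : 1 ≤ i) (hij : i + 2 ≤ j) (hjn : j + 1 ≤ n) :
    (typeDGen r i * typeDGen r j) ^ 2 = 1 := by
  rw [typeDGen_mul_typeDGen_pow hinv hRd10 hi (by omega) hjn (by omega), (by norm_num : 2 * 2 = 4),
    pow_eq_one_of_pow_mul_comm (hRd5 _ (by omega) (by omega)), mul_one, hinv (j + 1) (by omega) hjn]

end TypeDGenerators

theorem stmt17 (n : ℕ) (hn : 3 < n) (G : Type*) [Group G] (rb : G) (r : ℕ → G)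
    (hRd1 : rb * rb = 1)
    (hRd2 : ∀ k, 2 ≤ k → k ≤ n → r k * r k = 1)
    (hRd3 : (rb * r 2) ^ 2 = 1)
    (hRd4 : (r 2 * r 3) ^ 3 = 1)
    (hRd5 : ∀ k, 4 ≤ k → k ≤ n → (r 2 * r k) ^ 4 = 1)
    (hRd6 : (rb * r 3 * r 2 * r 3) ^ 3 = 1)
    (hRd7 : ∀ k, 4 ≤ k → k ≤ n → (rb * r k * r 2 * r k) ^ 2 = 1)
    (hRd8 : ∀ k, 3 ≤ k → k ≤ n - 1 →
      r k * r (k - 1) * r (k + 1) * r 2 * r (k + 1) * r k * r (k + 1) = 1)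
    (hRd9 : ∀ k, 3 ≤ k → k ≤ n - 1 →
      (r k * r (k - 1)) ^ 2 * r (k + 1) * r 3 * r (k + 1) * r (k - 1) * r (k + 1) = 1)
    (hRd10 : ∀ l k, 4 ≤ l → l ≤ n → 3 ≤ k → k ≤ l - 2 →
      r l * r (l - k + 2) * r 2 * r (l - k + 2) * r l * r k * r 2 * r k = 1) :
    let s : ℕ → G := fun i => r (i + 1) * r 2 * r (i + 1)
    (∀ i, 1 ≤ i → i ≤ n - 1 → s i * s i = 1) ∧
    (rb * rb = 1) ∧
    ((rb * s 2) ^ 3 = 1) ∧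
    (∀ i, 1 ≤ i → i ≤ n - 2 → (s i * s (i + 1)) ^ 3 = 1) ∧
    (∀ i, i = 1 ∨ (3 ≤ i ∧ i ≤ n - 1) → (rb * s i) ^ 2 = 1) ∧
    (∀ i j, 1 ≤ i → i ≤ n - 1 → i + 2 ≤ j → j ≤ n - 1 → (s i * s j) ^ 2 = 1) := by
  intro s
  have hz : r 2 * r 2 = 1 := hRd2 2 le_rfl (by omega)
  have hs₁ : s 1 = r 2 := typeDGen_one hz
  refine ⟨fun i hi hin => conj_mul_self_eq_one_s17 (hRd2 (i + 1) (by omega) (by omega)) hz, hRd1, ?_,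
    fun i hi hin => typeDGen_braid hRd2 hRd4 hRd5 hRd8 hRd9 hRd10 hi (by omega), ?_,
    fun i j hi _ hij hj => typeDGen_comm hRd2 hRd5 hRd10 hi hij (by omega)⟩
  · show (rb * (r 3 * r 2 * r 3)) ^ 3 = 1
    simpa only [mul_assoc] using hRd6
  · rintro i (rfl | ⟨hi, hin⟩)
    · rwa [hs₁]
    · show (rb * (r (i + 1) * r 2 * r (i + 1))) ^ 2 = 1
      simpa only [mul_assoc] using hRd7 (i + 1) (by omega) (by omega)
end

section
/- Let n > 3, let G be a group, let s_0', s_1, …, s_{n-1} ∈ G satisfy the type D Coxeter relations, and define r̄_2 = s_0' and r_k = s_1 (s_2 s_1) (s_3 s_2 s_1) ⋯ (s_{k-1} s_{k-2} ⋯ s_2 s_1) for k ∈ [2,n]. Then the elements r̄_2, r_2, …, r_n satisfy the relations (Rd1)–(Rd10). -/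
/-!
The `s i` satisfy the Coxeter relations of type `A`, and `r k` is (the image of) the longest
element of the symmetric group generated by `s 1, …, s (k - 1)`. Writing `t k = s k ⋯ s 1`,
one has both `r (k + 1) = r k * t k` and `r (k + 1) = (t k)⁻¹ * r k`; by induction on `k` this
gives `r k * r k = 1` and `r k * s i * r k = s (k - i)`. With these conjugation rules each
relation (Rd1)–(Rd10) collapses to a Coxeter relation of type `A` or `D`.
-/

/-- The word `s₁ (s₂ s₁) (s₃ s₂ s₁) ⋯ (s_{k-1} s_{k-2} ⋯ s₂ s₁)` in a group. -/
def rwordA {G : Type*} [Group G] (s : ℕ → G) (k : ℕ) : G :=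
  ((List.range (k - 1)).map (fun j => ((List.range (j + 1)).map (fun i => s (j + 1 - i))).prod)).prod

section

variable {G : Type*} [Group G]

lemma mul_mul_eq_of_pow_three_eq_one {a b : G} (ha : a * a = 1) (hb : b * b = 1)
    (h : (a * b) ^ 3 = 1) : a * b * a = b * a * b := by
  have : a * b * a = (b * a * b)⁻¹ :=
    mul_eq_one_iff_eq_inv.mp (by rw [← h, pow_three]; simp only [mul_assoc])
  simpa [mul_assoc, inv_eq_of_mul_eq_one_right ha, inv_eq_of_mul_eq_one_right hb] using this

lemma commute_of_pow_two_eq_one {a b : G} (ha : a * a = 1) (hb : b * b = 1)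
    (h : (a * b) ^ 2 = 1) : Commute a b := by
  have : a * b = (a * b)⁻¹ := mul_eq_one_iff_eq_inv.mp (by rw [← h, sq])
  show a * b = b * a
  simpa [inv_eq_of_mul_eq_one_right ha, inv_eq_of_mul_eq_one_right hb] using this

structure CoxeterRelationsA (n : ℕ) (s : ℕ → G) : Prop where
  mul_self : ∀ i, 1 ≤ i → i < n → s i * s i = 1
  pow_three : ∀ i, 1 ≤ i → i + 1 < n → (s i * s (i + 1)) ^ 3 = 1
  pow_two : ∀ i j, 1 ≤ i → i + 2 ≤ j → j < n → (s i * s j) ^ 2 = 1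

def descWord (s : ℕ → G) : ℕ → G
  | 0 => 1
  | k + 1 => s (k + 1) * descWord s k

lemma list_prod_map_range_eq_descWord (s : ℕ → G) (m : ℕ) :
    ((List.range m).map fun i => s (m - i)).prod = descWord s m := by
  induction m with
  | zero => rfl
  | succ m ih =>
    rw [List.range_succ_eq_map, List.map_cons, List.map_map, List.prod_cons, descWord, ← ih]
    simp [Function.comp_def]

lemma rwordA_succ (s : ℕ → G) (k : ℕ) : rwordA s (k + 1) = rwordA s k * descWord s k := by
  rcases k with _ | k
  · simp [rwordA, descWord]
  · simp only [rwordA, list_prod_map_range_eq_descWord, Nat.add_sub_cancel]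
    rw [List.range_succ, List.map_append, List.prod_append, List.map_singleton,
      List.prod_singleton]

lemma rwordA_two (s : ℕ → G) : rwordA s 2 = s 1 := by
  simp [rwordA]

lemma rwordA_three (s : ℕ → G) : rwordA s 3 = s 1 * (s 2 * s 1) := by
  rw [rwordA_succ, rwordA_two, descWord, descWord, descWord, mul_one]

namespace CoxeterRelationsA

variable {n : ℕ} {s : ℕ → G}

lemma inv_eq (h : CoxeterRelationsA n s) {i : ℕ} (h1 : 1 ≤ i) (hi : i < n) : (s i)⁻¹ = s i :=
  inv_eq_of_mul_eq_one_right (h.mul_self i h1 hi)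

lemma mul_mul_cancel (h : CoxeterRelationsA n s) {i : ℕ} (h1 : 1 ≤ i) (hi : i < n) (x : G) :
    s i * (s i * x) = x := by
  rw [← mul_assoc, h.mul_self i h1 hi, one_mul]

lemma braid (h : CoxeterRelationsA n s) {i : ℕ} (h1 : 1 ≤ i) (hi : i + 1 < n) :
    s i * s (i + 1) * s i = s (i + 1) * s i * s (i + 1) :=
  mul_mul_eq_of_pow_three_eq_one (h.mul_self i h1 (by omega)) (h.mul_self (i + 1) (by omega) hi)
    (h.pow_three i h1 hi)

lemma commute (h : CoxeterRelationsA n s) {i j : ℕ} (h1 : 1 ≤ i) (hij : i + 2 ≤ j)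
    (hj : j < n) : Commute (s i) (s j) :=
  commute_of_pow_two_eq_one (h.mul_self i h1 (by omega)) (h.mul_self j (by omega) hj)
    (h.pow_two i j h1 hij hj)

lemma commute_descWord (h : CoxeterRelationsA n s) {k j : ℕ} (hkj : k + 2 ≤ j) (hj : j < n) :
    Commute (descWord s k) (s j) := by
  induction k with
  | zero => exact Commute.one_left _
  | succ k ih => exact (h.commute (by omega) hkj hj).mul_left (ih (by omega))

lemma descWord_mul (h : CoxeterRelationsA n s) {k i : ℕ} (h1 : 1 ≤ i) (hik : i < k)
    (hk : k < n) :
    descWord s k * s (i + 1) = s i * descWord s k := by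
  induction k with
  | zero => omega
  | succ k ih =>
    obtain hik' | rfl : i < k ∨ i = k := by omega
    · rw [descWord, mul_assoc, ih hik' (by omega), ← mul_assoc, ← mul_assoc,
        (h.commute h1 (by omega) hk).eq]
    · obtain ⟨p, rfl⟩ : ∃ p, i = p + 1 := ⟨i - 1, by omega⟩
      calc descWord s (p + 2) * s (p + 2)
          = s (p + 2) * s (p + 1) * (descWord s p * s (p + 2)) := by
            simp only [descWord, mul_assoc]
        _ = s (p + 1) * s (p + 2) * s (p + 1) * descWord s p := by
            rw [(h.commute_descWord le_rfl hk).eq, ← mul_assoc, ← h.braid h1 hk]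
        _ = s (p + 1) * descWord s (p + 2) := by
            simp only [descWord, mul_assoc]

lemma descWord_mul_succ (h : CoxeterRelationsA n s) {m : ℕ} (h1 : 1 ≤ m) (hm : m + 1 < n) :
    descWord s m * s (m + 1) = s (m + 1) * s m * s (m + 1) * descWord s m := by
  obtain ⟨p, rfl⟩ : ∃ p, m = p + 1 := ⟨m - 1, by omega⟩
  calc descWord s (p + 1) * s (p + 2)
      = s (p + 1) * s (p + 2) * s (p + 1) * (s (p + 1) * descWord s p) := by
        rw [descWord, mul_assoc, (h.commute_descWord le_rfl hm).eq]
        simp only [mul_assoc, h.mul_mul_cancel h1 (by omega : p + 1 < n)]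
    _ = s (p + 2) * s (p + 1) * s (p + 2) * descWord s (p + 1) := by
        rw [h.braid h1 hm, descWord]

lemma commute_rwordA (h : CoxeterRelationsA n s) {k j : ℕ} (hkj : k + 1 ≤ j) (hj : j < n) :
    Commute (rwordA s k) (s j) := by
  induction k with
  | zero => simp [rwordA]
  | succ k ih =>
    rw [rwordA_succ]
    exact (ih (by omega)).mul_left (h.commute_descWord (by omega) hj)

lemma rwordA_succ_eq_inv_mul (h : CoxeterRelationsA n s) {k : ℕ} (hk : k < n) :
    rwordA s (k + 1) = (descWord s k)⁻¹ * rwordA s k := by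
  induction k with
  | zero => simp [rwordA, descWord]
  | succ m ih =>
    calc rwordA s (m + 2)
        = (descWord s m)⁻¹ * (rwordA s m * s (m + 1)) * descWord s m := by
          rw [rwordA_succ, ih (by omega), descWord]; simp only [mul_assoc]
      _ = (descWord s m)⁻¹ * (s (m + 1))⁻¹ * (rwordA s m * descWord s m) := by
          rw [(h.commute_rwordA le_rfl hk).eq, h.inv_eq (by omega) hk]; simp only [mul_assoc]
      _ = (descWord s (m + 1))⁻¹ * rwordA s (m + 1) := by
          rw [descWord, mul_inv_rev, rwordA_succ]

lemma rwordA_mul_self (h : CoxeterRelationsA n s) {k : ℕ} (hk : k ≤ n) :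
    rwordA s k * rwordA s k = 1 := by
  induction k with
  | zero => simp [rwordA]
  | succ m ih =>
    nth_rewrite 1 [h.rwordA_succ_eq_inv_mul hk]
    rw [rwordA_succ, mul_assoc, ← mul_assoc (rwordA s m), ih (by omega), one_mul,
      inv_mul_cancel]

lemma rwordA_mul (h : CoxeterRelationsA n s) {k i : ℕ} (h1 : 1 ≤ i) (hik : i < k)
    (hk : k ≤ n) :
    rwordA s k * s i = s (k - i) * rwordA s k := by
  induction k generalizing i with
  | zero => omega
  | succ m ih =>
    obtain hi | rfl : 2 ≤ i ∨ i = 1 := by omega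
    · obtain ⟨j, rfl⟩ : ∃ j, i = j + 1 := ⟨i - 1, by omega⟩
      rw [rwordA_succ, mul_assoc, h.descWord_mul (by omega) (by omega) (by omega), ← mul_assoc,
        ih (by omega) (by omega) (by omega), mul_assoc, ← rwordA_succ, Nat.add_sub_add_right]
    · obtain rfl | hm : m = 1 ∨ 2 ≤ m := by omega
      · rw [rwordA_two]
      obtain ⟨p, rfl⟩ : ∃ p, m = p + 1 := ⟨m - 1, by omega⟩
      have hdesc : SemiconjBy (descWord s (p + 1))⁻¹ (s p) (s (p + 1)) :=
        SemiconjBy.inv_symm_left (h.descWord_mul (by omega) (by omega) (by omega))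
      calc rwordA s (p + 2) * s 1
          = (descWord s (p + 1))⁻¹ * s p * rwordA s (p + 1) := by
            rw [h.rwordA_succ_eq_inv_mul (by omega), mul_assoc, ih le_rfl (by omega) (by omega),
              ← mul_assoc, Nat.add_sub_cancel]
        _ = s (p + 2 - 1) * rwordA s (p + 2) := by
            rw [hdesc.eq, mul_assoc, ← h.rwordA_succ_eq_inv_mul (by omega)]; rfl

lemma rwordA_mul_mul (h : CoxeterRelationsA n s) {k i : ℕ} (h1 : 1 ≤ i) (hik : i < k)
    (hk : k ≤ n) : rwordA s k * s i * rwordA s k = s (k - i) := by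
  rw [h.rwordA_mul h1 hik hk, mul_assoc, h.rwordA_mul_self hk, mul_one]

lemma rwordA_mul_rwordA_two_mul (h : CoxeterRelationsA n s) {k : ℕ} (hk2 : 2 ≤ k)
    (hk : k ≤ n) : rwordA s k * rwordA s 2 * rwordA s k = s (k - 1) := by
  rw [rwordA_two, h.rwordA_mul_mul le_rfl hk2 hk]

lemma rwordA_two_mul_rwordA_three_pow_three (h : CoxeterRelationsA n s) (hn : 2 < n) :
    (rwordA s 2 * rwordA s 3) ^ 3 = 1 := by
  have h21 : s 2 * s 1 = (s 1 * s 2)⁻¹ := by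
    rw [mul_inv_rev, h.inv_eq le_rfl (by omega), h.inv_eq (by omega) hn]
  rw [rwordA_two, rwordA_three, h.mul_mul_cancel le_rfl (by omega), h21, inv_pow,
    h.pow_three 1 le_rfl hn, inv_one]

lemma rwordA_two_mul_rwordA_sq (h : CoxeterRelationsA n s) {k : ℕ} (hk2 : 2 ≤ k)
    (hk : k ≤ n) :
    (rwordA s 2 * rwordA s k) ^ 2 = s 1 * s (k - 1) := by
  rw [sq, mul_assoc, ← mul_assoc (rwordA s k), h.rwordA_mul_rwordA_two_mul hk2 hk, rwordA_two]

lemma rwordA_rd8 (h : CoxeterRelationsA n s) {k : ℕ} (hk1 : 1 ≤ k) (hk : k + 1 ≤ n) :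
    rwordA s k * rwordA s (k - 1) * rwordA s (k + 1) * rwordA s 2 * rwordA s (k + 1) *
      rwordA s k * rwordA s (k + 1) = 1 := by
  obtain ⟨m, rfl⟩ : ∃ m, k = m + 1 := ⟨k - 1, by omega⟩
  have hconj : rwordA s (m + 2) * rwordA s 2 * rwordA s (m + 2) = s (m + 1) :=
    h.rwordA_mul_rwordA_two_mul (by omega) hk
  have hsucc : rwordA s (m + 1) * rwordA s (m + 2) = s (m + 1) * descWord s m := by
    rw [rwordA_succ s (m + 1), ← mul_assoc, h.rwordA_mul_self (by omega), one_mul, descWord]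
  calc rwordA s (m + 1) * rwordA s (m + 1 - 1) * rwordA s (m + 2) * rwordA s 2 *
        rwordA s (m + 2) * rwordA s (m + 1) * rwordA s (m + 2)
      = rwordA s (m + 1) * rwordA s m * (rwordA s (m + 2) * rwordA s 2 * rwordA s (m + 2)) *
          (rwordA s (m + 1) * rwordA s (m + 2)) := by simp only [Nat.add_sub_cancel, mul_assoc]
    _ = rwordA s (m + 1) * (rwordA s m * descWord s m) := by
        rw [hconj, hsucc, mul_assoc, h.mul_mul_cancel (by omega) (by omega), mul_assoc]
    _ = 1 := by rw [← rwordA_succ, h.rwordA_mul_self (by omega)]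

lemma rwordA_rd9 (h : CoxeterRelationsA n s) {k : ℕ} (hk2 : 2 ≤ k) (hk : k + 1 ≤ n) :
    (rwordA s k * rwordA s (k - 1)) ^ 2 * rwordA s (k + 1) * rwordA s 3 * rwordA s (k + 1) *
      rwordA s (k - 1) * rwordA s (k + 1) = 1 := by
  obtain ⟨m, rfl⟩ : ∃ m, k = m + 1 := ⟨k - 1, by omega⟩
  have hU : rwordA s (m + 1) * rwordA s m = (descWord s m)⁻¹ := by
    rw [h.rwordA_succ_eq_inv_mul (by omega), mul_assoc, h.rwordA_mul_self (by omega), mul_one]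
  have hC : rwordA s (m + 2) * rwordA s 3 * rwordA s (m + 2) = s (m + 1) * s m * s (m + 1) := by
    have hr : ∀ x, rwordA s (m + 2) * (rwordA s (m + 2) * x) = x := fun x => by
      rw [← mul_assoc, h.rwordA_mul_self hk, one_mul]
    calc rwordA s (m + 2) * rwordA s 3 * rwordA s (m + 2)
        = rwordA s (m + 2) * s 1 * rwordA s (m + 2) * (rwordA s (m + 2) * s 2 * rwordA s (m + 2)) *
            (rwordA s (m + 2) * s 1 * rwordA s (m + 2)) := by
          simp only [rwordA_three, mul_assoc, hr]
      _ = s (m + 1) * s m * s (m + 1) := by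
          rw [h.rwordA_mul_mul le_rfl (by omega) hk, h.rwordA_mul_mul (by omega) (by omega) hk]; rfl
  have hT : rwordA s m * rwordA s (m + 2) = descWord s m * s (m + 1) * descWord s m := by
    rw [rwordA_succ s (m + 1), rwordA_succ s m, ← mul_assoc, ← mul_assoc,
      h.rwordA_mul_self (by omega), one_mul, descWord, mul_assoc]
  have hsq : s (m + 1) * s m * s (m + 1) * (s (m + 1) * s m * s (m + 1)) = 1 := by
    simp only [mul_assoc, h.mul_mul_cancel (by omega : 1 ≤ m + 1) (by omega : m + 1 < n),
      h.mul_mul_cancel (by omega : 1 ≤ m) (by omega : m < n), h.mul_self (m + 1) (by omega) hk]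
  calc (rwordA s (m + 1) * rwordA s (m + 1 - 1)) ^ 2 * rwordA s (m + 2) * rwordA s 3 *
        rwordA s (m + 2) * rwordA s (m + 1 - 1) * rwordA s (m + 2)
      = (rwordA s (m + 1) * rwordA s m) ^ 2 *
          (rwordA s (m + 2) * rwordA s 3 * rwordA s (m + 2)) *
          (rwordA s m * rwordA s (m + 2)) := by simp only [Nat.add_sub_cancel, mul_assoc]
    _ = (descWord s m)⁻¹ * (descWord s m)⁻¹ *
          (s (m + 1) * s m * s (m + 1) * (s (m + 1) * s m * s (m + 1))) *
          (descWord s m * descWord s m) := by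
        rw [sq, hU, hC, hT, h.descWord_mul_succ (by omega) (by omega)]
        simp only [mul_assoc]
    _ = 1 := by rw [hsq]; group

lemma rwordA_rd10 (h : CoxeterRelationsA n s) {l k : ℕ} (hk : 2 ≤ k) (hkl : k ≤ l)
    (hl : l ≤ n) :
    rwordA s l * rwordA s (l - k + 2) * rwordA s 2 * rwordA s (l - k + 2) * rwordA s l *
      rwordA s k * rwordA s 2 * rwordA s k = 1 :=
  calc rwordA s l * rwordA s (l - k + 2) * rwordA s 2 * rwordA s (l - k + 2) * rwordA s l *
        rwordA s k * rwordA s 2 * rwordA s k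
      = rwordA s l * (rwordA s (l - k + 2) * rwordA s 2 * rwordA s (l - k + 2)) * rwordA s l *
          (rwordA s k * rwordA s 2 * rwordA s k) := by simp only [mul_assoc]
    _ = s (k - 1) * s (k - 1) := by
        rw [h.rwordA_mul_rwordA_two_mul (by omega) (by omega),
          h.rwordA_mul_rwordA_two_mul hk (by omega), h.rwordA_mul_mul (by omega) (by omega) hl,
          show l - (l - k + 2 - 1) = k - 1 by omega]
    _ = 1 := h.mul_self (k - 1) (by omega) (by omega)

end CoxeterRelationsA

end

theorem stmt18 (n : ℕ) (hn : 3 < n) (G : Type*) [Group G] (s0' : G) (s : ℕ → G)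
    (hD1 : ∀ i, 1 ≤ i → i ≤ n - 1 → s i * s i = 1)
    (hD2 : s0' * s0' = 1)
    (hD3 : (s0' * s 2) ^ 3 = 1)
    (hD4 : ∀ i, 1 ≤ i → i ≤ n - 2 → (s i * s (i + 1)) ^ 3 = 1)
    (hD5 : ∀ i, i = 1 ∨ (3 ≤ i ∧ i ≤ n - 1) → (s0' * s i) ^ 2 = 1)
    (hD6 : ∀ i j, 1 ≤ i → i ≤ n - 1 → i + 2 ≤ j → j ≤ n - 1 → (s i * s j) ^ 2 = 1) :
    let rb : G := s0'
    let r : ℕ → G := rwordA s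
    (rb * rb = 1) ∧
    (∀ k, 2 ≤ k → k ≤ n → r k * r k = 1) ∧
    ((rb * r 2) ^ 2 = 1) ∧
    ((r 2 * r 3) ^ 3 = 1) ∧
    (∀ k, 4 ≤ k → k ≤ n → (r 2 * r k) ^ 4 = 1) ∧
    ((rb * r 3 * r 2 * r 3) ^ 3 = 1) ∧
    (∀ k, 4 ≤ k → k ≤ n → (rb * r k * r 2 * r k) ^ 2 = 1) ∧
    (∀ k, 3 ≤ k → k ≤ n - 1 →
      r k * r (k - 1) * r (k + 1) * r 2 * r (k + 1) * r k * r (k + 1) = 1) ∧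
    (∀ k, 3 ≤ k → k ≤ n - 1 →
      (r k * r (k - 1)) ^ 2 * r (k + 1) * r 3 * r (k + 1) * r (k - 1) * r (k + 1) = 1) ∧
    (∀ l k, 4 ≤ l → l ≤ n → 3 ≤ k → k ≤ l - 2 →
      r l * r (l - k + 2) * r 2 * r (l - k + 2) * r l * r k * r 2 * r k = 1) := by
  dsimp only
  have h : CoxeterRelationsA n s :=
    ⟨fun i h1 hi => hD1 i h1 (by omega), fun i h1 hi => hD4 i h1 (by omega),
      fun i j h1 hij hj => hD6 i j h1 (by omega) hij (by omega)⟩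
  refine ⟨hD2, fun k _ hk => h.rwordA_mul_self hk, ?_,
    h.rwordA_two_mul_rwordA_three_pow_three (by omega), fun k hk4 hk => ?_, ?_,
    fun k hk4 hk => ?_,
    fun k hk3 hk => h.rwordA_rd8 (by omega) (by omega),
    fun k hk3 hk => h.rwordA_rd9 (by omega) (by omega),
    fun l k hl4 hl hk3 hkl => h.rwordA_rd10 (by omega) (by omega) hl⟩
  · rw [rwordA_two]
    exact hD5 1 (Or.inl rfl)
  · rw [show 4 = 2 * 2 from rfl, pow_mul, h.rwordA_two_mul_rwordA_sq (by omega) hk]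
    exact hD6 1 (k - 1) le_rfl (by omega) (by omega) (by omega)
  · rw [mul_assoc, mul_assoc, ← mul_assoc (rwordA s 3),
      h.rwordA_mul_rwordA_two_mul (k := 3) (by omega) (by omega)]
    exact hD3
  · rw [mul_assoc, mul_assoc, ← mul_assoc (rwordA s k),
      h.rwordA_mul_rwordA_two_mul (by omega) hk]
    exact hD5 (k - 1) (Or.inr ⟨by omega, by omega⟩)
end
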